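/- Let F be the free group on two generators x and y, and let a, b be integers with |a| ≥ 2 and |b| ≥ 2. Then x^a · y^b is not a primitive element of F; that is, there is no basis of F containing x^a · y^b. -/

import Mathlib

/-!
If an automorphism `φ` of `F = ⟨x, y⟩` sent `x` to `x^a y^b`, then `F / ⟨⟨x^a y^b⟩⟩ ≅ F / ⟨⟨x⟩⟩ ≅ ℤ`
would be cyclic, so any two elements `u, v` of a group with `u^a v^b = 1` would commute.
The homotheties of `ℂ` with centre `0` and ratio a primitive `|a|`-th root of unity and with
centre `1` and ratio a primitive `|b|`-th root of unity satisfy `u^a = v^b = 1` but do not commute.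
-/

open FreeGroup

theorem FreeGroup.map_mem_zpowers_of_map_of_true_eq_one {G : Type*} [Group G]
    (f : FreeGroup Bool →* G) (hf : f (of true) = 1) (w : FreeGroup Bool) :
    f w ∈ Subgroup.zpowers (f (of false)) := by
  suffices ⊤ ≤ (Subgroup.zpowers (f (of false))).comap f from this trivial
  rw [← closure_range_of, Subgroup.closure_le]
  rintro _ ⟨(_ | _), rfl⟩
  · exact Subgroup.mem_zpowers _
  · simp [hf]

theorem FreeGroup.commute_of_map_apply_of_true_eq_one {G : Type*} [Group G]
    (φ : FreeGroup Bool ≃* FreeGroup Bool) (ψ : FreeGroup Bool →* G)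
    (hψ : ψ (φ (of true)) = 1) (g g' : FreeGroup Bool) : Commute (ψ g) (ψ g') := by
  set f := ψ.comp φ.toMonoidHom
  have hψf : ∀ g, ψ g = f (φ.symm g) := fun g => by simp [f]
  obtain ⟨k, hk⟩ := map_mem_zpowers_of_map_of_true_eq_one f hψ (φ.symm g)
  obtain ⟨l, hl⟩ := map_mem_zpowers_of_map_of_true_eq_one f hψ (φ.symm g')
  rw [hψf, hψf, ← hk, ← hl]
  exact Commute.zpow_zpow_self _ k l

theorem FreeGroup.commute_of_zpow_mul_zpow_eq_one {G : Type*} [Group G] {a b : ℤ}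
    (φ : FreeGroup Bool ≃* FreeGroup Bool) (hφ : φ (of true) = of true ^ a * of false ^ b)
    {u v : G} (huv : u ^ a * v ^ b = 1) : Commute u v := by
  let ψ : FreeGroup Bool →* G := FreeGroup.lift fun c => cond c u v
  simpa [ψ] using commute_of_map_apply_of_true_eq_one φ ψ (by simpa [ψ, hφ] using huv)
    (of true) (of false)

theorem AffineEquiv.not_commute_homothetyUnitsMulHom_zero_one {k : Type*} [Field k]
    {ζ ξ : kˣ} (hζ : ζ ≠ 1) (hξ : ξ ≠ 1) :
    ¬ Commute (homothetyUnitsMulHom (0 : k) ζ) (homothetyUnitsMulHom (1 : k) ξ) := by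
  intro h
  have h0 : (ζ : k) * (1 - ξ) = 1 - ξ := by
    have := congrArg (fun e : k ≃ᵃ[k] k => e 0) h.eq
    simp only [coe_mul, coe_homothetyUnitsMulHom_apply, Function.comp_apply,
      AffineMap.homothety_apply, vsub_eq_sub, smul_eq_mul, vadd_eq_add] at this
    linear_combination this
  have : ((ζ : k) - 1) * (1 - ξ) = 0 := by linear_combination h0
  rcases mul_eq_zero.mp this with hζ1 | hξ1
  · exact hζ (Units.val_eq_one.mp (sub_eq_zero.mp hζ1))
  · exact hξ (Units.val_eq_one.mp (sub_eq_zero.mp hξ1).symm)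

theorem IsPrimitiveRoot.zpow_natAbs_self {G : Type*} [CommGroup G] {ζ : G} {a : ℤ}
    (hζ : IsPrimitiveRoot ζ a.natAbs) : ζ ^ a = 1 :=
  (hζ.zpow_eq_one_iff_dvd a).mpr Int.natAbs_dvd_self

theorem Complex.exists_isPrimitiveRoot_units {n : ℕ} (hn : n ≠ 0) :
    ∃ ζ : ℂˣ, IsPrimitiveRoot ζ n :=
  ⟨_, (isPrimitiveRoot_exp n hn).isUnit_unit hn⟩

/-- In the free group `F` on two generators, `x^a · y^b` with `|a| ≥ 2`, `|b| ≥ 2`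
is not primitive: it is not the image of a generator under any automorphism of `F`
(equivalently, it belongs to no free basis of `F`). -/
theorem stmt_14 (a b : ℤ) (ha : 2 ≤ |a|) (hb : 2 ≤ |b|) :
    ¬ ∃ φ : FreeGroup Bool ≃* FreeGroup Bool,
      φ (FreeGroup.of true) = (FreeGroup.of true) ^ a * (FreeGroup.of false) ^ b := by
  rintro ⟨φ, hφ⟩
  rw [Int.abs_eq_natAbs] at ha hb
  obtain ⟨ζ, hζ⟩ := Complex.exists_isPrimitiveRoot_units (n := a.natAbs) (by omega)
  obtain ⟨ξ, hξ⟩ := Complex.exists_isPrimitiveRoot_units (n := b.natAbs) (by omega)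
  refine AffineEquiv.not_commute_homothetyUnitsMulHom_zero_one (hζ.ne_one (by omega))
    (hξ.ne_one (by omega)) (commute_of_zpow_mul_zpow_eq_one φ hφ ?_)
  rw [← map_zpow, ← map_zpow, hζ.zpow_natAbs_self, hξ.zpow_natAbs_self, _root_.map_one,
    _root_.map_one, one_mul]
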